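/- Let G be a finite connected simple graph with n vertices and m edges, w : D(G) → ℍ an arc weight, and K, L, J₀, W, D_w as below. Then for every t ∈ ℂ with t² ≠ 1, ψ(ᵀL)·(I_{4m} + t·ψ(J₀))⁻¹·ψ(K) = (1 − t²)⁻¹·ψ(ᵀW) − t·(1 − t²)⁻¹·ψ(D_w). -/

import Mathlib

/-!
ψ is multiplicative and unital (it is the entrywise complex representation of ℍ), so the
identity can be checked over ℍ. Since J₀² = I, for t² ≠ 1 we have
(I + tJ₀)⁻¹ = (1 − t²)⁻¹(I − tJ₀), and it remains to compute ᵀL K = ᵀW, because the only arc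
with terminus u and origin v is (v, u), and ᵀL J₀ K = D_w, because ᵀL J₀ is the
vertex-arc incidence matrix of origins.
-/

noncomputable section

open Matrix

/-- Simplex part of a quaternion: `q = Sc q + j * Pc q`. -/
def Sc (q : Quaternion ℝ) : ℂ := ⟨q.re, q.imI⟩

/-- Perplex part of a quaternion: `q = Sc q + j * Pc q`. -/
def Pc (q : Quaternion ℝ) : ℂ := ⟨q.imJ, -q.imK⟩

/-- The map ψ sending a quaternionic matrix `M = M^S + j·M^P` (symplectic decomposition)
to the complex block matrix `[[M^S, -conj(M^P)], [M^P, conj(M^S)]]`. -/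
def psi {I J : Type*} (M : Matrix I J (Quaternion ℝ)) :
    Matrix (I ⊕ I) (J ⊕ J) ℂ :=
  Matrix.fromBlocks (M.map Sc) (-((M.map Pc).map (starRingEnd ℂ)))
    (M.map Pc) ((M.map Sc).map (starRingEnd ℂ))

variable {V : Type*}

/-- The quaternionic weighted matrix W: `W u v = w((u,v))` if `(u,v)` is an arc, else 0. -/
def quatWeightMatrix [Fintype V] [DecidableEq V] (G : SimpleGraph V) [DecidableRel G.Adj]
    (w : G.Dart → Quaternion ℝ) : Matrix V V (Quaternion ℝ) := fun u v =>
  if h : G.Adj u v then w ⟨(u, v), h⟩ else 0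

/-- The quaternionic weighted arc matrix B_w: `(B_w) e f = w(f)` if `t(e) = o(f)`, else 0. -/
def quatArcMatrix [Fintype V] [DecidableEq V] (G : SimpleGraph V) [DecidableRel G.Adj]
    (w : G.Dart → Quaternion ℝ) : Matrix G.Dart G.Dart (Quaternion ℝ) := fun e f =>
  if e.toProd.2 = f.toProd.1 then w f else 0

/-- The quaternionic arc-inversion matrix J₀: `(J₀) e f = 1` if `f = e⁻¹`, else 0. -/
def quatArcInvMatrix [Fintype V] [DecidableEq V] (G : SimpleGraph V) [DecidableRel G.Adj] :
    Matrix G.Dart G.Dart (Quaternion ℝ) := fun e f =>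
  if f = e.symm then 1 else 0

/-- The quaternionic weighted degree matrix D_w: diagonal with
`(D_w)_{uu} = Σ_{e : o(e) = u} w(e)`. -/
def quatDegMatrix [Fintype V] [DecidableEq V] (G : SimpleGraph V) [DecidableRel G.Adj]
    (w : G.Dart → Quaternion ℝ) : Matrix V V (Quaternion ℝ) :=
  Matrix.diagonal fun u => ∑ e : G.Dart, if e.toProd.1 = u then w e else 0

/-- The 2m×n matrix K: `K e v = w(e)` if `o(e) = v`, else 0. -/
def quatKMatrix [Fintype V] [DecidableEq V] (G : SimpleGraph V) [DecidableRel G.Adj]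
    (w : G.Dart → Quaternion ℝ) : Matrix G.Dart V (Quaternion ℝ) := fun e v =>
  if e.toProd.1 = v then w e else 0

/-- The 2m×n matrix L: `L e v = 1` if `t(e) = v`, else 0. -/
def quatLMatrix [Fintype V] [DecidableEq V] (G : SimpleGraph V) [DecidableRel G.Adj] :
    Matrix G.Dart V (Quaternion ℝ) := fun e v =>
  if e.toProd.2 = v then 1 else 0

def scAddHom : Quaternion ℝ →+ ℂ where
  toFun := Sc
  map_zero' := by apply Complex.ext <;> simp [Sc, Quaternion.re_zero, Quaternion.imI_zero]
  map_add' p q := by apply Complex.ext <;> simp [Sc]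

def pcAddHom : Quaternion ℝ →+ ℂ where
  toFun := Pc
  map_zero' := by apply Complex.ext <;> simp [Pc, Quaternion.imJ_zero, Quaternion.imK_zero]
  map_add' p q := by apply Complex.ext <;> simp [Pc]; ring

theorem Sc_zero : Sc 0 = 0 := map_zero scAddHom

theorem Pc_zero : Pc 0 = 0 := map_zero pcAddHom

theorem Sc_sum {α : Type*} (s : Finset α) (f : α → Quaternion ℝ) :
    Sc (∑ x ∈ s, f x) = ∑ x ∈ s, Sc (f x) := map_sum scAddHom f s

theorem Pc_sum {α : Type*} (s : Finset α) (f : α → Quaternion ℝ) :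
    Pc (∑ x ∈ s, f x) = ∑ x ∈ s, Pc (f x) := map_sum pcAddHom f s

theorem Sc_one : Sc 1 = 1 := by
  apply Complex.ext <;> simp [Sc, Quaternion.re_one, Quaternion.imI_one]

theorem Pc_one : Pc 1 = 0 := by
  apply Complex.ext <;> simp [Pc, Quaternion.imJ_one, Quaternion.imK_one]

theorem Sc_mul (p q : Quaternion ℝ) :
    Sc (p * q) = Sc p * Sc q - starRingEnd ℂ (Pc p) * Pc q := by
  apply Complex.ext <;> simp [Sc, Pc, Quaternion.re_mul, Quaternion.imI_mul] <;> ring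

theorem Pc_mul (p q : Quaternion ℝ) :
    Pc (p * q) = starRingEnd ℂ (Sc p) * Pc q + Pc p * Sc q := by
  apply Complex.ext <;> simp [Sc, Pc, Quaternion.imJ_mul, Quaternion.imK_mul] <;> ring

theorem psi_mul {I J K : Type*} [Fintype J] (M : Matrix I J (Quaternion ℝ))
    (N : Matrix J K (Quaternion ℝ)) : psi (M * N) = psi M * psi N := by
  ext (i | i) (k | k) <;>
  · simp only [psi, fromBlocks_apply₁₁, fromBlocks_apply₁₂, fromBlocks_apply₂₁,
      fromBlocks_apply₂₂, mul_apply, Fintype.sum_sum_type, map_apply, Matrix.neg_apply, Sc_sum,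
      Pc_sum, Sc_mul, Pc_mul, map_sum, map_add, map_sub, map_mul, Complex.conj_conj,
      ← Finset.sum_neg_distrib, ← Finset.sum_add_distrib]
    exact Finset.sum_congr rfl fun j _ => by ring

theorem psi_one {I : Type*} [DecidableEq I] : psi (1 : Matrix I I (Quaternion ℝ)) = 1 := by
  ext (i | i) (j | j) <;> by_cases h : i = j <;>
    simp [psi, one_apply, h, Sc_one, Pc_one, Sc_zero, Pc_zero]

theorem Matrix.inv_one_add_smul_of_mul_self_eq_one {n K : Type*} [Fintype n] [DecidableEq n]
    [Field K] {P : Matrix n n K} (hP : P * P = 1) {t : K} (ht : t ^ 2 ≠ 1) :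
    (1 + t • P)⁻¹ = (1 - t ^ 2)⁻¹ • (1 - t • P) := by
  have hne : (1 : K) - t ^ 2 ≠ 0 := sub_ne_zero.mpr ht.symm
  have hprod : (1 + t • P) * (1 - t • P) = (1 - t ^ 2) • (1 : Matrix n n K) := by
    rw [add_mul, mul_sub, mul_sub, one_mul, one_mul, mul_one, smul_mul_smul_comm, hP]
    module
  refine inv_eq_right_inv ?_
  rw [mul_smul_comm, hprod, smul_smul, inv_mul_cancel₀ hne, one_smul]

namespace SimpleGraph

variable {G : SimpleGraph V}

theorem Dart.eq_symm_comm {d e : G.Dart} : d = e.symm ↔ e = d.symm :=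
  eq_comm.trans Dart.symm_involutive.eq_iff

theorem sum_dart_ite_toProd_eq [Fintype V] [DecidableEq V] [DecidableRel G.Adj] {M : Type*}
    [AddCommMonoid M] (f : G.Dart → M) (p : V × V) :
    ∑ e : G.Dart, (if e.toProd = p then f e else 0) =
      if h : G.Adj p.1 p.2 then f ⟨p, h⟩ else 0 := by
  split_ifs with h
  · simp_rw [← Dart.ext_iff (d₂ := ⟨p, h⟩)]
    exact Fintype.sum_ite_eq' _ f
  · refine Finset.sum_eq_zero fun e _ => if_neg ?_
    rintro rfl
    exact h e.adj

end SimpleGraph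

section Incidence

variable [Fintype V] [DecidableEq V] (G : SimpleGraph V) [DecidableRel G.Adj]

theorem quatArcInvMatrix_mul_self : quatArcInvMatrix G * quatArcInvMatrix G = 1 := by
  ext e f : 1
  simp [quatArcInvMatrix, mul_apply, one_apply, SimpleGraph.Dart.eq_symm_comm (d := f),
    SimpleGraph.Dart.symm_involutive.injective.eq_iff, eq_comm]

theorem transpose_quatLMatrix_mul_quatKMatrix (w : G.Dart → Quaternion ℝ) :
    (quatLMatrix G)ᵀ * quatKMatrix G w = (quatWeightMatrix G w)ᵀ := by
  ext u v : 1
  simp only [mul_apply, transpose_apply, quatLMatrix, quatKMatrix, quatWeightMatrix, ite_mul,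
    one_mul, zero_mul, ← ite_and]
  simp_rw [and_comm, ← Prod.ext_iff (y := (v, u))]
  exact SimpleGraph.sum_dart_ite_toProd_eq w (v, u)

theorem transpose_quatLMatrix_mul_quatArcInvMatrix :
    (quatLMatrix G)ᵀ * quatArcInvMatrix G = of fun u e => if e.toProd.1 = u then 1 else 0 := by
  ext u e : 1
  simp [quatLMatrix, quatArcInvMatrix, mul_apply, SimpleGraph.Dart.eq_symm_comm (d := e)]

theorem transpose_quatLMatrix_mul_quatArcInvMatrix_mul_quatKMatrix (w : G.Dart → Quaternion ℝ) :
    (quatLMatrix G)ᵀ * quatArcInvMatrix G * quatKMatrix G w = quatDegMatrix G w := by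
  rw [transpose_quatLMatrix_mul_quatArcInvMatrix]
  ext u v : 1
  by_cases h : u = v
  · subst h; simp [quatKMatrix, quatDegMatrix, mul_apply, ← ite_and]
  · simp only [quatKMatrix, quatDegMatrix, mul_apply, of_apply, diagonal_apply_ne _ h, ite_mul,
      one_mul, zero_mul, ← ite_and]
    exact Finset.sum_eq_zero fun e _ => if_neg fun ⟨hu, hv⟩ => h (hu.symm.trans hv)

end Incidence

theorem quat_middle_identity_general [Fintype V] [DecidableEq V] (G : SimpleGraph V)
    [DecidableRel G.Adj] (w : G.Dart → Quaternion ℝ)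
    (t : ℂ) (ht : t ^ 2 ≠ 1) :
    psi ((quatLMatrix G)ᵀ) *
        ((1 : Matrix (G.Dart ⊕ G.Dart) (G.Dart ⊕ G.Dart) ℂ) +
          t • psi (quatArcInvMatrix G))⁻¹ * psi (quatKMatrix G w) =
      (1 - t ^ 2)⁻¹ • psi ((quatWeightMatrix G w)ᵀ) -
        (t * (1 - t ^ 2)⁻¹) • psi (quatDegMatrix G w) := by
  have hJ : psi (quatArcInvMatrix G) * psi (quatArcInvMatrix G) = 1 := by
    rw [← psi_mul, quatArcInvMatrix_mul_self, psi_one]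
  rw [inv_one_add_smul_of_mul_self_eq_one hJ ht, ← transpose_quatLMatrix_mul_quatKMatrix,
    ← transpose_quatLMatrix_mul_quatArcInvMatrix_mul_quatKMatrix, psi_mul, psi_mul, psi_mul]
  simp only [Matrix.mul_smul, Matrix.smul_mul, Matrix.mul_sub, Matrix.sub_mul, Matrix.mul_one,
    smul_sub, smul_smul, Matrix.mul_assoc, mul_comm]

/-- for t ∈ ℂ with t² ≠ 1,
ψ(ᵀL)(I_{4m} + tψ(J₀))⁻¹ψ(K) = (1−t²)⁻¹ψ(ᵀW) − t(1−t²)⁻¹ψ(D_w). -/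
theorem quat_middle_identity [Fintype V] [DecidableEq V] (G : SimpleGraph V)
    [DecidableRel G.Adj] (hG : G.Connected) (w : G.Dart → Quaternion ℝ)
    (t : ℂ) (ht : t ^ 2 ≠ 1) :
    psi ((quatLMatrix G)ᵀ) *
        ((1 : Matrix (G.Dart ⊕ G.Dart) (G.Dart ⊕ G.Dart) ℂ) +
          t • psi (quatArcInvMatrix G))⁻¹ * psi (quatKMatrix G w) =
      (1 - t ^ 2)⁻¹ • psi ((quatWeightMatrix G w)ᵀ) -
        (t * (1 - t ^ 2)⁻¹) • psi (quatDegMatrix G w) :=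
  quat_middle_identity_general G w t ht
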